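/- Second Goodstein sequence theorem: for every natural number m, the Goodstein sequence G(m) reaches 0 (i.e., there exists n ≥ 1 with G(n, m) = 0) if and only if it is finitely bounded (i.e., there exists a natural number C such that G(n, m) ≤ C for all n ≥ 1). -/

import Mathlib

/-!
Zero is a fixed point of `x ↦ B b x - 1`, so a sequence that reaches `0` is bounded by its
finitely many earlier terms. Conversely, if every term is at most `C`, then from index `C + 1`
on each term is a single digit in its base, base change leaves it unchanged, and the sequence
simply decreases by one per step until it hits `0`.
-/

/-- `hsub b u m` substitutes the value `u` for the base `b` throughout the
hereditary base-`b` representation of `m` (with `hsub b u 0 = 0`). -/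
def hsub (b u : ℕ) (m : ℕ) : ℕ :=
  if m = 0 then 0
  else
    u ^ hsub b u (Nat.log b m) * (m / b ^ Nat.log b m) + hsub b u (m % b ^ Nat.log b m)
termination_by m
decreasing_by
  · exact Nat.log_lt_self b (by assumption)
  · have hpos : 0 < b ^ Nat.log b m := by
      rcases Nat.eq_zero_or_pos b with hb | hb
      · simp [hb]
      · exact pow_pos hb _
    exact lt_of_lt_of_le (Nat.mod_lt _ hpos) (Nat.pow_log_le_self b (by assumption))

/-- Goodstein's base-change ("bumping") function: replace the base `b` by `b + 1`
throughout the hereditary base-`b` representation of `m` (with `B b 0 = 0`). -/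
def B (b m : ℕ) : ℕ := hsub b (b + 1) m

/-- The Goodstein sequence of `m`: `G 1 m = m`, and `G (k+1) m = B (k+1) (G k m) - 1`
for `k ≥ 1` (truncated subtraction), so the `k`-th term is written in hereditary
base `k + 1`. -/
def G : ℕ → ℕ → ℕ
  | 0, m => m
  | 1, m => m
  | (k + 2), m => B (k + 2) (G (k + 1) m) - 1

/-- The auxiliary Goodstein-type sequence: `L 1 k = k ^ k` (written in hereditary
base `k`), and `L (n+1) k = B (k+n-1) (L n k) - 1` for `n ≥ 1` (truncated
subtraction), so the `n`-th term is written in hereditary base `k + n - 1`. -/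
def L : ℕ → ℕ → ℕ
  | 0, k => k ^ k
  | 1, k => k ^ k
  | (n + 2), k => B (k + n) (L (n + 1) k) - 1

/-- `O b m` is the ordinal obtained by substituting `ω` for the base `b`
throughout the hereditary base-`b` representation of `m` (with `O b 0 = 0`). -/
noncomputable def O (b : ℕ) (m : ℕ) : Ordinal :=
  if m = 0 then 0
  else
    Ordinal.omega0 ^ O b (Nat.log b m) * ((m / b ^ Nat.log b m : ℕ) : Ordinal)
      + O b (m % b ^ Nat.log b m)
termination_by m
decreasing_by
  · exact Nat.log_lt_self b (by assumption)
  · have hpos : 0 < b ^ Nat.log b m := by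
      rcases Nat.eq_zero_or_pos b with hb | hb
      · simp [hb]
      · exact pow_pos hb _
    exact lt_of_lt_of_le (Nat.mod_lt _ hpos) (Nat.pow_log_le_self b (by assumption))

lemma hsub_zero (b u : ℕ) : hsub b u 0 = 0 := by
  rw [hsub]; simp

lemma hsub_of_lt {b m : ℕ} (u : ℕ) (h : m < b) : hsub b u m = m := by
  rcases Nat.eq_zero_or_pos m with rfl | hm
  · exact hsub_zero b u
  · have hlog : Nat.log b m = 0 := Nat.log_eq_zero_iff.mpr (Or.inl h)
    rw [hsub]
    simp [hm.ne', hlog, Nat.mod_one, hsub_zero]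

lemma B_zero (b : ℕ) : B b 0 = 0 :=
  hsub_zero b (b + 1)

lemma B_of_lt {b m : ℕ} (h : m < b) : B b m = m :=
  hsub_of_lt (b + 1) h

lemma G_succ (m : ℕ) {k : ℕ} (hk : 1 ≤ k) : G (k + 1) m = B (k + 1) (G k m) - 1 := by
  obtain ⟨j, rfl⟩ : ∃ j, k = j + 1 := ⟨k - 1, by omega⟩
  rfl

lemma G_succ_of_lt {m k : ℕ} (hk : 1 ≤ k) (h : G k m < k + 1) : G (k + 1) m = G k m - 1 := by
  rw [G_succ m hk, B_of_lt h]

lemma G_eq_zero_of_le {m n k : ℕ} (hn : 1 ≤ n) (h0 : G n m = 0) (hnk : n ≤ k) : G k m = 0 := by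
  induction k, hnk using Nat.le_induction with
  | base => exact h0
  | succ k hnk ih => rw [G_succ m (hn.trans hnk), ih, B_zero]

lemma G_le_sup_of_eq_zero {m n : ℕ} (hn : 1 ≤ n) (h0 : G n m = 0) (k : ℕ) :
    G k m ≤ (Finset.range n).sup (G · m) := by
  rcases lt_or_ge k n with hkn | hnk
  · exact Finset.le_sup (f := (G · m)) (Finset.mem_range.mpr hkn)
  · simp [G_eq_zero_of_le hn h0 hnk]

lemma G_add_eq_sub_of_forall_le {m C : ℕ} (hC : ∀ n, 1 ≤ n → G n m ≤ C) (j : ℕ) :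
    G (C + 1 + j) m = G (C + 1) m - j := by
  induction j with
  | zero => rfl
  | succ j ih =>
    have hlt : G (C + 1 + j) m < C + 1 + j + 1 := by
      have := hC (C + 1 + j) (by omega)
      omega
    rw [← add_assoc, G_succ_of_lt (by omega) hlt, ih, Nat.sub_sub]

/-- **Second Goodstein sequence theorem**: for every natural number `m`, the
Goodstein sequence of `m` reaches `0` if and only if it is finitely bounded. -/
theorem second_goodstein_sequence_theorem (m : ℕ) :
    (∃ n : ℕ, 1 ≤ n ∧ G n m = 0) ↔ (∃ C : ℕ, ∀ n : ℕ, 1 ≤ n → G n m ≤ C) := by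
  constructor
  · rintro ⟨n, hn, h0⟩
    exact ⟨_, fun k _ => G_le_sup_of_eq_zero hn h0 k⟩
  · rintro ⟨C, hC⟩
    refine ⟨C + 1 + G (C + 1) m, by omega, ?_⟩
    rw [G_add_eq_sub_of_forall_le hC, Nat.sub_self]
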